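/- arXiv:2510.20599 — 2 statements merged into one kernel-verified Lean document; each statement's English description precedes it below -/
import Mathlib

section
/- If γ : [a₀, b] → ℝ² is a C² arc-length parameterized curve (|γ'(s)| = 1 for all s) such that the two open disks of radius r > 0 tangent to the image of γ at γ(s) do not intersect the image of γ, then |γ''(s)| ≤ 1/r for every s ∈ [a₀, b]. -/
open Set

/-- Second derivative test: at a local minimum, the second derivative is nonnegative. -/
lemma sdt_aux {g g' : ℝ → ℝ} {s L : ℝ}
    (hg : ∀ t, HasDerivAt g (g' t) t)
    (hg' : HasDerivAt g' L s)
    (hmin : ∀ᶠ t in nhds s, g s ≤ g t) : 0 ≤ L := by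
  by_contra hL
  push_neg at hL
  have hz : g' s = 0 := by
    have hloc : IsLocalMin g s := hmin
    have := hloc.deriv_eq_zero
    rwa [(hg s).deriv] at this
  have hslope : ∀ᶠ t in nhdsWithin s {s}ᶜ, slope g' s t < 0 :=
    (hasDerivAt_iff_tendsto_slope.mp hg').eventually (Iio_mem_nhds hL)
  rw [eventually_nhdsWithin_iff] at hslope
  obtain ⟨ε, hε, hεs⟩ := Metric.eventually_nhds_iff.mp hslope
  obtain ⟨ε', hε', hε's⟩ := Metric.eventually_nhds_iff.mp hmin
  set δ : ℝ := min ε ε' / 2 with hδdef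
  have hδ : 0 < δ := by positivity
  have hneg : ∀ t ∈ Ioo s (s + δ), g' t < 0 := by
    intro t ht
    have hts : t ≠ s := ne_of_gt ht.1
    have hdist : dist t s < ε := by
      rw [Real.dist_eq, abs_of_pos (sub_pos.mpr ht.1)]
      have h1 := ht.2
      have h2 : min ε ε' ≤ ε := min_le_left _ _
      rw [hδdef] at h1
      linarith
    have hsl := hεs hdist hts
    rw [slope_def_field, hz] at hsl
    have hpos : 0 < t - s := sub_pos.mpr ht.1
    rcases div_neg_iff.mp hsl with ⟨_, h⟩ | ⟨h, _⟩ <;> linarith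
  have hanti : StrictAntiOn g (Icc s (s + δ)) := by
    apply strictAntiOn_of_deriv_neg (convex_Icc _ _)
    · exact fun t _ => (hg t).continuousAt.continuousWithinAt
    · intro t ht
      rw [interior_Icc] at ht
      rw [(hg t).deriv]
      exact hneg t ht
  have h1 : g (s + δ) < g s :=
    hanti (left_mem_Icc.mpr (by linarith)) (right_mem_Icc.mpr (by linarith)) (by linarith)
  have h2 : g s ≤ g (s + δ) := by
    apply hε's
    rw [Real.dist_eq, add_sub_cancel_left, abs_of_pos hδ]
    have h2 : min ε ε' ≤ ε' := min_le_right _ _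
    rw [hδdef]
    linarith
  linarith

theorem stmt0 (a₀ b r : ℝ) (hr : 0 < r) (hab : a₀ < b)
    (γ : ℝ → EuclideanSpace ℝ (Fin 2))
    (hC2 : ContDiff ℝ 2 γ)
    (hunit : ∀ s ∈ Set.Icc a₀ b, ‖deriv γ s‖ = 1)
    (hdisk : ∀ s ∈ Set.Icc a₀ b, ∀ n : EuclideanSpace ℝ (Fin 2), ‖n‖ = 1 →
      (inner ℝ n (deriv γ s) : ℝ) = 0 →
      Metric.ball (γ s + r • n) r ∩ γ '' Set.Icc a₀ b = ∅) :
    ∀ s ∈ Set.Icc a₀ b, ‖deriv (deriv γ) s‖ ≤ 1 / r := by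
  set γ' := deriv γ with hγ'def
  set γ'' := deriv γ' with hγ''def
  have h2 : ContDiff ℝ (1 + 1 : WithTop ℕ∞) γ := by
    rw [show (1 + 1 : WithTop ℕ∞) = 2 from by norm_num]; exact hC2
  have hdiff : Differentiable ℝ γ := (contDiff_succ_iff_deriv.mp h2).1
  have hC1' : ContDiff ℝ 1 γ' := (contDiff_succ_iff_deriv.mp h2).2.2
  have hdiff' : Differentiable ℝ γ' := (contDiff_one_iff_deriv.mp hC1').1
  have hcont'' : Continuous γ'' := (contDiff_one_iff_deriv.mp hC1').2
  have hd1 : ∀ t, HasDerivAt γ (γ' t) t := fun t => (hdiff t).hasDerivAt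
  have hd2 : ∀ t, HasDerivAt γ' (γ'' t) t := fun t => (hdiff' t).hasDerivAt
  -- main claim on the open interval
  have key : ∀ s ∈ Set.Ioo a₀ b, ‖γ'' s‖ ≤ 1 / r := by
    intro s hs
    have hsIcc : s ∈ Set.Icc a₀ b := Ioo_subset_Icc_self hs
    have hnbhd : Set.Icc a₀ b ∈ nhds s := mem_nhds_iff.mpr ⟨Ioo a₀ b, Ioo_subset_Icc_self, isOpen_Ioo, hs⟩
    by_cases h0 : γ'' s = 0
    · rw [h0, norm_zero]; positivity
    -- orthogonality of γ'' s and γ' s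
    have hperp : (inner ℝ (γ'' s) (γ' s) : ℝ) = 0 := by
      have hsq : ∀ t, HasDerivAt (fun t => (inner ℝ (γ' t) (γ' t) : ℝ))
          ((inner ℝ (γ' t) (γ'' t) : ℝ) + inner ℝ (γ'' t) (γ' t)) t :=
        fun t => (hd2 t).inner ℝ (hd2 t)
      have heq : (fun t => (inner ℝ (γ' t) (γ' t) : ℝ)) =ᶠ[nhds s] fun _ => (1 : ℝ) := by
        filter_upwards [hnbhd] with t ht
        rw [real_inner_self_eq_norm_sq, hunit t ht]; norm_num
      have h1 : HasDerivAt (fun t => (inner ℝ (γ' t) (γ' t) : ℝ)) 0 s :=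
        (hasDerivAt_const s (1:ℝ)).congr_of_eventuallyEq heq
      have hu := h1.unique (hsq s)
      have hcomm : (inner ℝ (γ'' s) (γ' s) : ℝ) = inner ℝ (γ' s) (γ'' s) := real_inner_comm _ _
      linarith
    set n : EuclideanSpace ℝ (Fin 2) := ‖γ'' s‖⁻¹ • γ'' s with hndef
    have hn : ‖n‖ = 1 := by
      rw [hndef, norm_smul, norm_inv, norm_norm, inv_mul_cancel₀ (norm_ne_zero_iff.mpr h0)]
    have hnperp : (inner ℝ n (γ' s) : ℝ) = 0 := by
      rw [hndef, real_inner_smul_left, hperp, mul_zero]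
    set c : EuclideanSpace ℝ (Fin 2) := γ s + r • n with hcdef
    have hball := hdisk s hsIcc n hn hnperp
    -- the squared distance function
    set g : ℝ → ℝ := fun t => (inner ℝ (γ t - c) (γ t - c) : ℝ) with hgdef
    set g' : ℝ → ℝ := fun t => (inner ℝ (γ t - c) (γ' t) : ℝ) + inner ℝ (γ' t) (γ t - c) with hg'def
    have hdg : ∀ t, HasDerivAt g (g' t) t := by
      intro t
      exact ((hd1 t).sub_const c).inner ℝ ((hd1 t).sub_const c)
    have hdg' : HasDerivAt g' ((inner ℝ (γ s - c) (γ'' s) : ℝ) + inner ℝ (γ' s) (γ' s)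
        + ((inner ℝ (γ' s) (γ' s) : ℝ) + inner ℝ (γ'' s) (γ s - c))) s := by
      exact (((hd1 s).sub_const c).inner ℝ (hd2 s)).add ((hd2 s).inner ℝ ((hd1 s).sub_const c))
    have hgs : g s = r ^ 2 := by
      have : γ s - c = -(r • n) := by rw [hcdef]; abel
      rw [hgdef]
      simp only [this, inner_neg_neg, real_inner_self_eq_norm_sq, norm_smul, hn,
        Real.norm_eq_abs, abs_of_pos hr, mul_one]
    have hmin : ∀ᶠ t in nhds s, g s ≤ g t := by
      filter_upwards [hnbhd] with t ht
      have hnotin : γ t ∉ Metric.ball c r := by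
        intro hmem
        have : γ t ∈ Metric.ball c r ∩ γ '' Set.Icc a₀ b := ⟨hmem, mem_image_of_mem γ ht⟩
        rw [hball] at this
        exact this
      rw [Metric.mem_ball, not_lt, dist_eq_norm] at hnotin
      rw [hgs, hgdef]
      simp only [real_inner_self_eq_norm_sq]
      nlinarith [hnotin, norm_nonneg (γ t - c)]
    have hL := sdt_aux hdg hdg' hmin
    -- compute the second derivative value
    have hγsc : γ s - c = -(r • n) := by rw [hcdef]; abel
    have hinner'' : (inner ℝ (γ s - c) (γ'' s) : ℝ) = -(r * ‖γ'' s‖) := by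
      rw [hγsc, inner_neg_left, real_inner_smul_left, hndef, real_inner_smul_left,
        real_inner_self_eq_norm_sq]
      have hne : ‖γ'' s‖ ≠ 0 := norm_ne_zero_iff.mpr h0
      field_simp
    have hinner2 : (inner ℝ (γ'' s) (γ s - c) : ℝ) = -(r * ‖γ'' s‖) := by
      rw [real_inner_comm]; exact hinner''
    have hγ's : (inner ℝ (γ' s) (γ' s) : ℝ) = 1 := by
      rw [real_inner_self_eq_norm_sq, hunit s hsIcc]; norm_num
    rw [hinner'', hinner2, hγ's] at hL
    rw [le_div_iff₀ hr]
    nlinarith [hL]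
  -- extend to the closed interval by continuity
  have hclosed : IsClosed {t | ‖γ'' t‖ ≤ 1 / r} :=
    isClosed_le (hcont''.norm) continuous_const
  have hsub : Set.Icc a₀ b ⊆ {t | ‖γ'' t‖ ≤ 1 / r} := by
    rw [← closure_Ioo (ne_of_lt hab)]
    exact closure_minimal key hclosed
  exact fun s hs => hsub hs
end

section
/- Let u ∈ C⁰([T₀,T₁]; X) with X a Banach space, and let L be the memory operator (Lu)(t) := ∫_{T₀}^t e^{τ−t} u(τ) dτ. Then Lu is continuously differentiable on [T₀,T₁] with (Lu)'(t) = u(t) − (Lu)(t), and for any continuous bilinear form B on X and t₁ < t₂ in [T₀,T₁], (1/h)∫_{t₁}^{t₂} B((Lu)(t) − (Lu)(t+2h), u(t+h)) dt → −2∫_{t₁}^{t₂} B((Lu)'(t), u(t)) dt as h → 0⁺. -/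
open Filter MeasureTheory

theorem stmt10 (X : Type*) [NormedAddCommGroup X] [NormedSpace ℝ X] [CompleteSpace X]
    (T₀ T₁ t₁ t₂ : ℝ) (hT : T₀ ≤ t₁) (h12 : t₁ < t₂) (h2 : t₂ ≤ T₁)
    (u : ℝ → X) (hu : Continuous u)
    (B : X →L[ℝ] X →L[ℝ] ℝ) :
    (∀ t ∈ Set.Icc T₀ T₁,
      HasDerivWithinAt (fun τ => ∫ σ in T₀..τ, Real.exp (σ - τ) • u σ)
        (u t - ∫ σ in T₀..t, Real.exp (σ - t) • u σ) (Set.Icc T₀ T₁) t) ∧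
    ContinuousOn (fun t => u t - ∫ σ in T₀..t, Real.exp (σ - t) • u σ) (Set.Icc T₀ T₁) ∧
    Tendsto (fun h : ℝ => (1 / h) * ∫ t in t₁..t₂,
        B ((∫ σ in T₀..t, Real.exp (σ - t) • u σ) -
           (∫ σ in T₀..(t + 2 * h), Real.exp (σ - (t + 2 * h)) • u σ)) (u (t + h)))
      (nhdsWithin 0 (Set.Ioi 0))
      (nhds (-2 * ∫ t in t₁..t₂,
        B (u t - ∫ σ in T₀..t, Real.exp (σ - t) • u σ) (u t))) := by
  have hvcont : Continuous (fun σ => Real.exp σ • u σ) := Real.continuous_exp.smul hu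
  set G : ℝ → X := fun t => ∫ σ in T₀..t, Real.exp σ • u σ with hGdef
  have hGd : ∀ t, HasDerivAt G (Real.exp t • u t) t := fun t =>
    intervalIntegral.integral_hasDerivAt_right (hvcont.intervalIntegrable _ _)
      (hvcont.stronglyMeasurableAtFilter _ _) hvcont.continuousAt
  set Lu : ℝ → X := fun t => ∫ σ in T₀..t, Real.exp (σ - t) • u σ with hLudef
  have hLu : ∀ t, (∫ σ in T₀..t, Real.exp (σ - t) • u σ) = Lu t := fun t => rfl
  have hLeq : ∀ t, Lu t = Real.exp (-t) • G t := by
    intro t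
    rw [hLudef, hGdef]
    simp only
    rw [← intervalIntegral.integral_smul]
    apply intervalIntegral.integral_congr
    intro σ _
    show Real.exp (σ - t) • u σ = Real.exp (-t) • Real.exp σ • u σ
    rw [smul_smul, ← Real.exp_add]
    ring_nf
  have hLd : ∀ t, HasDerivAt Lu (u t - Lu t) t := by
    intro t
    have h1 : HasDerivAt (fun s => Real.exp (-s)) (Real.exp (-t) * (-1)) t :=
      (hasDerivAt_neg t).exp
    have h2 := h1.smul (hGd t)
    have heq : (fun s => Real.exp (-s) • G s) = Lu := funext fun s => (hLeq s).symm
    rw [show ((fun s => Real.exp (-s)) • G) = Lu from heq] at h2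
    convert h2 using 1
    rw [hLeq t, smul_smul, ← Real.exp_add, neg_add_cancel, Real.exp_zero]
    module
  have hLcont : Continuous Lu := continuous_iff_continuousAt.2 fun t => (hLd t).continuousAt
  set g : ℝ → X := fun t => u t - Lu t with hgdef
  have hgcont : Continuous g := hu.sub hLcont
  refine ⟨fun t _ => (hLd t).hasDerivWithinAt, hgcont.continuousOn, ?_⟩
  -- bounds
  obtain ⟨M, hM⟩ := (isCompact_Icc : IsCompact (Set.Icc t₁ (t₂ + 2))).exists_bound_of_continuousOn
    hgcont.continuousOn
  obtain ⟨C, hC⟩ := (isCompact_Icc : IsCompact (Set.Icc t₁ (t₂ + 1))).exists_bound_of_continuousOn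
    hu.continuousOn
  have hM0 : 0 ≤ M := le_trans (norm_nonneg _) (hM t₁ ⟨le_refl _, by linarith⟩)
  have hC0 : 0 ≤ C := le_trans (norm_nonneg _) (hC t₁ ⟨le_refl _, by linarith⟩)
  have key : Tendsto
      (fun h : ℝ => ∫ t in t₁..t₂, (1 / h) * B (Lu t - Lu (t + 2 * h)) (u (t + h)))
      (nhdsWithin 0 (Set.Ioi 0))
      (nhds (∫ t in t₁..t₂, -2 * B (g t) (u t))) := by
    apply intervalIntegral.tendsto_integral_filter_of_dominated_convergence
      (bound := fun _ => ‖B‖ * (2 * M) * C)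
    · filter_upwards with h
      exact (Continuous.mul continuous_const
        ((B.continuous₂).comp
          (((hLcont.sub (hLcont.comp (continuous_id.add continuous_const))).prodMk
            (hu.comp (continuous_id.add continuous_const)))))).aestronglyMeasurable
    · filter_upwards [Ioc_mem_nhdsGT_of_mem (Set.mem_Ico.2 ⟨le_refl (0:ℝ), one_pos⟩)] with h hh
      refine Eventually.of_forall fun t ht => ?_
      rw [Set.uIoc_of_le h12.le] at ht
      obtain ⟨hh0, hh1⟩ := hh
      obtain ⟨ht1, ht2⟩ := ht
      have hftc : Lu (t + 2 * h) - Lu t = ∫ s in t..(t + 2 * h), g s :=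
        (intervalIntegral.integral_eq_sub_of_hasDerivAt
          (fun s _ => hLd s) (hgcont.intervalIntegrable _ _)).symm
      have hΔ : ‖Lu t - Lu (t + 2 * h)‖ ≤ M * (2 * h) := by
        rw [← norm_neg, neg_sub, hftc]
        have := intervalIntegral.norm_integral_le_of_norm_le_const
          (C := M) (f := g) (a := t) (b := t + 2 * h) (fun s hs => by
            rw [Set.uIoc_of_le (by linarith : t ≤ t + 2 * h)] at hs
            exact hM s ⟨by linarith [hs.1], by linarith [hs.2]⟩)
        calc ‖∫ s in t..(t + 2 * h), g s‖ ≤ M * |t + 2 * h - t| := this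
          _ = M * (2 * h) := by rw [show t + 2 * h - t = 2 * h by ring, abs_of_pos (by linarith)]
      have hv : ‖u (t + h)‖ ≤ C := hC _ ⟨by linarith, by linarith⟩
      calc ‖(1 / h) * B (Lu t - Lu (t + 2 * h)) (u (t + h))‖
          = (1 / h) * ‖B (Lu t - Lu (t + 2 * h)) (u (t + h))‖ := by
            rw [norm_mul, Real.norm_eq_abs, Real.norm_eq_abs, abs_of_pos (by positivity)]
        _ ≤ (1 / h) * (‖B‖ * (M * (2 * h)) * C) := by
            have hop := B.le_opNorm₂ (Lu t - Lu (t + 2 * h)) (u (t + h))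
            have : ‖B (Lu t - Lu (t + 2 * h)) (u (t + h))‖ ≤ ‖B‖ * (M * (2 * h)) * C := by
              refine hop.trans ?_
              gcongr
            gcongr
        _ = ‖B‖ * (2 * M) * C := by field_simp
    · exact intervalIntegrable_const
    · refine Eventually.of_forall fun t _ => ?_
      have hs : Tendsto (fun h : ℝ => t + 2 * h) (nhdsWithin 0 (Set.Ioi 0))
          (nhdsWithin t {t}ᶜ) := by
        apply tendsto_nhdsWithin_of_tendsto_nhds_of_eventually_within
        · have h0 : Tendsto (fun h : ℝ => t + 2 * h) (nhds 0) (nhds (t + 2 * 0)) := by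
            exact tendsto_const_nhds.add ((continuous_const.mul continuous_id).tendsto 0)
          simpa using h0.mono_left nhdsWithin_le_nhds
        · filter_upwards [self_mem_nhdsWithin] with h hh
          simp only [Set.mem_compl_iff, Set.mem_singleton_iff]
          intro hcon
          have : h = 0 := by linarith
          exact absurd this (ne_of_gt hh)
      have hslope : Tendsto (fun h : ℝ => slope Lu t (t + 2 * h))
          (nhdsWithin 0 (Set.Ioi 0)) (nhds (g t)) :=
        (hasDerivAt_iff_tendsto_slope.1 (hLd t)).comp hs
      have harg : Tendsto (fun h : ℝ => (1 / h) • (Lu t - Lu (t + 2 * h)))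
          (nhdsWithin 0 (Set.Ioi 0)) (nhds ((-2 : ℝ) • g t)) := by
        have h2 := hslope.const_smul (-2 : ℝ)
        have heq : (fun h : ℝ => (-2 : ℝ) • slope Lu t (t + 2 * h)) =
            fun h : ℝ => (1 / h) • (Lu t - Lu (t + 2 * h)) := by
          funext h
          rw [slope_def_module, smul_smul, show t + 2 * h - t = 2 * h by ring, mul_inv,
            show Lu t - Lu (t + 2 * h) = -(Lu (t + 2 * h) - Lu t) by abel, smul_neg,
            ← neg_smul]
          congr 1
          ring
        rwa [heq] at h2
      have hut : Tendsto (fun h : ℝ => u (t + h)) (nhdsWithin 0 (Set.Ioi 0)) (nhds (u t)) := by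
        have h0 : Tendsto (fun h : ℝ => t + h) (nhds 0) (nhds (t + 0)) :=
          tendsto_const_nhds.add tendsto_id
        rw [add_zero] at h0
        exact (hu.tendsto t).comp (h0.mono_left nhdsWithin_le_nhds)
      have hfin : Tendsto (fun h : ℝ => B ((1 / h) • (Lu t - Lu (t + 2 * h))) (u (t + h)))
          (nhdsWithin 0 (Set.Ioi 0)) (nhds (B ((-2 : ℝ) • g t) (u t))) :=
        (B.continuous₂.tendsto _).comp (harg.prodMk_nhds hut)
      have heq2 : (fun h : ℝ => B ((1 / h) • (Lu t - Lu (t + 2 * h))) (u (t + h))) =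
          fun h : ℝ => (1 / h) * B (Lu t - Lu (t + 2 * h)) (u (t + h)) := by
        funext h
        rw [B.map_smul, ContinuousLinearMap.smul_apply, smul_eq_mul]
      have heq3 : B ((-2 : ℝ) • g t) (u t) = -2 * B (g t) (u t) := by
        rw [B.map_smul, ContinuousLinearMap.smul_apply, smul_eq_mul]
      rw [heq2, heq3] at hfin
      exact hfin
  simp only [hLu]
  simp only [← intervalIntegral.integral_const_mul]
  exact key
end
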